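/- arXiv:1305.4559 — 2 statements merged into one kernel-verified Lean document; each statement's English description precedes it below -/
import Mathlib

section
/- Let G be a finite connected simple graph on n ≥ 2 vertices, let x_0 be any vertex of G, and let (x_0, x_1, x_2, x_3, x_4) be a simple random walk on G started at x_0. Then P( d(x_0, x_4) < 4 ) ≥ 1/(4 n^{2/3}). -/
open scoped Classical

/-- One-step transition weight of the simple random walk on `G`:
`1/deg a` if `a ∼ b`, and `0` otherwise. -/
noncomputable def stepWt {V : Type} [Fintype V] (G : SimpleGraph V) (a b : V) : ℝ :=
  if G.Adj a b then ((G.degree a : ℝ))⁻¹ else 0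

/-- Probability that the simple random walk on `G` of length `t`, started at `x0`,
produces a trajectory satisfying the event `E`. -/
noncomputable def walkProb {V : Type} [Fintype V] (G : SimpleGraph V) (t : ℕ) (x0 : V)
    (E : (Fin (t + 1) → V) → Prop) : ℝ :=
  ∑ p : Fin (t + 1) → V,
    if p 0 = x0 ∧ E p then ∏ i : Fin t, stepWt G (p i.castSucc) (p i.succ) else 0

/-- Expectation of the functional `f` of the trajectory of the simple random walk on `G`
of length `t`, started at `x0`. -/
noncomputable def walkExp {V : Type} [Fintype V] (G : SimpleGraph V) (t : ℕ) (x0 : V)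
    (f : (Fin (t + 1) → V) → ℝ) : ℝ :=
  ∑ p : Fin (t + 1) → V,
    (if p 0 = x0 then ∏ i : Fin t, stepWt G (p i.castSucc) (p i.succ) else 0) * f p

/-!
Let `D = n ^ (2/3)` and let `P` be the probability in question. If `x₂ = x₀` or `x₃ = x₁`,
then `x₄` is within distance `2` of `x₀`, so both events have probability at most `P`. A step
into a vertex of degree at most `D` is reversed by the next step with probability at least
`1 / D`; hence, unless `P ≥ 1 / (4D)`, with probability more than `1/2` both `x₁` and `x₂` have
degree larger than `D`. Call `ν` this part of the law of `x₂` and `ν'` its image under one more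
step. Since `ν ≤ 1 / D` and `ν` lives on vertices of degree larger than `D` within distance `2`
of `x₀`, every vertex `t` has at least `D² ν'(t)` neighbours in that ball, so
`P ≥ D² ∑ ν'(t)² / deg t`. By Cauchy–Schwarz and `∑ deg ≤ n²` this is at least
`D² / (4 n²) = 1 / (4D)`.
-/

open Finset

lemma sum_fun_fin_succ {α M : Type*} [Fintype α] [AddCommMonoid M] {n : ℕ}
    (f : (Fin (n + 1) → α) → M) :
    ∑ p, f p = ∑ a, ∑ q : Fin n → α, f (Matrix.vecCons a q) := by
  rw [← (Fin.consEquiv fun _ => α).sum_comp, Fintype.sum_prod_type]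
  rfl

lemma sum_fun_fin_zero {α M : Type*} [Fintype α] [AddCommMonoid M] (f : (Fin 0 → α) → M) :
    ∑ p, f p = f ![] := by
  rw [Fintype.sum_unique]; congr

lemma sum_sum_sum_comm {α M : Type*} [Fintype α] [AddCommMonoid M] (f : α → α → α → M) :
    ∑ a, ∑ b, ∑ c, f a b c = ∑ c, ∑ b, ∑ a, f a b c :=
  calc ∑ a, ∑ b, ∑ c, f a b c = ∑ b, ∑ a, ∑ c, f a b c := sum_comm
    _ = ∑ b, ∑ c, ∑ a, f a b c := sum_congr rfl fun _ _ => sum_comm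
    _ = ∑ c, ∑ b, ∑ a, f a b c := sum_comm

lemma dist_le_two_of_adj_of_adj {V : Type*} {G : SimpleGraph V} {a b c : V} (hab : G.Adj a b)
    (hbc : G.Adj b c) : G.dist a c ≤ 2 :=
  SimpleGraph.dist_le (.cons hab (.cons hbc .nil))

section

variable {V : Type} [Fintype V] (G : SimpleGraph V) (D : ℝ) (x0 : V)

lemma stepWt_nonneg (a b : V) : 0 ≤ stepWt G a b := by
  unfold stepWt; split <;> positivity

lemma adj_of_stepWt_ne_zero {a b : V} (h : stepWt G a b ≠ 0) : G.Adj a b := by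
  by_contra hab; simp [stepWt, hab] at h

lemma stepWt_le_inv_degree (a b : V) : stepWt G a b ≤ (G.degree a : ℝ)⁻¹ := by
  unfold stepWt; split
  · exact le_rfl
  · positivity

lemma sum_stepWt {a : V} (ha : G.degree a ≠ 0) : ∑ b, stepWt G a b = 1 := by
  simp only [stepWt, sum_ite, sum_const_zero, add_zero, sum_const, nsmul_eq_mul]
  rw [← SimpleGraph.neighborFinset_eq_filter, SimpleGraph.card_neighborFinset_eq_degree]
  exact mul_inv_cancel₀ (by exact_mod_cast ha)

lemma stepWt_div_degree_comm (a b : V) :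
    stepWt G a b / G.degree b = stepWt G b a / G.degree a := by
  unfold stepWt
  by_cases h : G.Adj a b
  · rw [if_pos h, if_pos h.symm]; ring
  · rw [if_neg h, if_neg (fun h' => h h'.symm), zero_div, zero_div]

lemma stepWt_le_mul_stepWt_mul_stepWt {a b : V} (hb : (G.degree b : ℝ) ≤ D) :
    stepWt G a b ≤ D * (stepWt G a b * stepWt G b a) := by
  by_cases h : G.Adj a b
  · have hdeg : (0 : ℝ) < G.degree b := by exact_mod_cast h.degree_pos_right
    have hback : stepWt G b a = (G.degree b : ℝ)⁻¹ := if_pos h.symm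
    calc stepWt G a b = stepWt G a b * G.degree b * stepWt G b a := by
          rw [hback, mul_assoc, mul_inv_cancel₀ hdeg.ne', mul_one]
      _ ≤ stepWt G a b * D * stepWt G b a := by
          gcongr
          · exact stepWt_nonneg G b a
          · exact stepWt_nonneg G a b
      _ = D * (stepWt G a b * stepWt G b a) := by ring
  · simp [stepWt, h]

lemma walkProb_four (E : (Fin 5 → V) → Prop) :
    walkProb G 4 x0 E =
      ∑ x1, ∑ x2, ∑ x3, ∑ x4,
        if E ![x0, x1, x2, x3, x4] then
          stepWt G x0 x1 * stepWt G x1 x2 * stepWt G x2 x3 * stepWt G x3 x4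
        else 0 := by
  simp only [walkProb, sum_fun_fin_succ, sum_fun_fin_zero, Fin.prod_univ_four]
  rw [Finset.sum_eq_single x0 (by simp_all) (by simp)]
  simp

noncomputable def oneStepNearProb (y : V) : ℝ :=
  ∑ z, stepWt G y z * if G.dist x0 z < 4 then 1 else 0

noncomputable def fourStepNearProb : ℝ :=
  ∑ x1, ∑ x2, ∑ x3, stepWt G x0 x1 * stepWt G x1 x2 * stepWt G x2 x3 * oneStepNearProb G x0 x3

lemma walkProb_eq_fourStepNearProb :
    walkProb G 4 x0 (fun p => G.dist x0 (p (Fin.last 4)) < 4) = fourStepNearProb G x0 := by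
  simp only [walkProb_four, fourStepNearProb, oneStepNearProb, mul_sum, mul_ite, mul_one,
    mul_zero]
  congr!

lemma oneStepNearProb_nonneg (y : V) : 0 ≤ oneStepNearProb G x0 y :=
  sum_nonneg fun z _ => mul_nonneg (stepWt_nonneg G y z) (by split <;> norm_num)

lemma fourStepNearProb_term_nonneg (x1 x2 x3 : V) :
    0 ≤ stepWt G x0 x1 * stepWt G x1 x2 * stepWt G x2 x3 * oneStepNearProb G x0 x3 := by
  have hp := stepWt_nonneg G
  exact mul_nonneg (mul_nonneg (mul_nonneg (hp _ _) (hp _ _)) (hp _ _))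
    (oneStepNearProb_nonneg G x0 x3)

lemma oneStepNearProb_of_adj {y : V} (hy : G.Adj x0 y) : oneStepNearProb G x0 y = 1 := by
  rw [← sum_stepWt G hy.degree_pos_right.ne']
  refine sum_congr rfl fun z _ => ?_
  by_cases hz : G.Adj y z
  · rw [if_pos ((dist_le_two_of_adj_of_adj hy hz).trans_lt (by norm_num)), mul_one]
  · simp [stepWt, hz]

lemma stepWt_mul_oneStepNearProb (y : V) :
    stepWt G x0 y * oneStepNearProb G x0 y = stepWt G x0 y := by
  by_cases hy : G.Adj x0 y
  · rw [oneStepNearProb_of_adj G x0 hy, mul_one]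
  · simp [stepWt, hy]

lemma sum_stepWt_mul_stepWt_le_fourStepNearProb (hx0 : G.degree x0 ≠ 0) :
    ∑ x1, stepWt G x0 x1 * stepWt G x1 x0 ≤ fourStepNearProb G x0 := by
  refine sum_le_sum fun x1 _ => ?_
  calc stepWt G x0 x1 * stepWt G x1 x0
      = ∑ x3, stepWt G x0 x1 * stepWt G x1 x0 * stepWt G x0 x3 * oneStepNearProb G x0 x3 := by
        simp only [mul_assoc, stepWt_mul_oneStepNearProb, ← mul_sum, sum_stepWt G hx0, mul_one]
    _ ≤ _ := single_le_sum (f := fun x2 => ∑ x3, _)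
        (fun x2 _ => sum_nonneg fun x3 _ => fourStepNearProb_term_nonneg G x0 x1 x2 x3)
        (mem_univ x0)

lemma sum_stepWt_mul_stepWt_mul_stepWt_le_fourStepNearProb :
    ∑ x1, ∑ x2, stepWt G x0 x1 * stepWt G x1 x2 * stepWt G x2 x1 ≤ fourStepNearProb G x0 := by
  refine sum_le_sum fun x1 _ => sum_le_sum fun x2 _ => ?_
  calc stepWt G x0 x1 * stepWt G x1 x2 * stepWt G x2 x1
      = stepWt G x0 x1 * stepWt G x1 x2 * stepWt G x2 x1 * oneStepNearProb G x0 x1 := by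
        linear_combination (stepWt G x1 x2 * stepWt G x2 x1) *
          (stepWt_mul_oneStepNearProb G x0 x1).symm
    _ ≤ _ := single_le_sum
        (f := fun x3 => stepWt G x0 x1 * stepWt G x1 x2 * stepWt G x2 x3 * oneStepNearProb G x0 x3)
        (fun x3 _ => fourStepNearProb_term_nonneg G x0 x1 x2 x3) (mem_univ x1)

noncomputable def highDegInd (v : V) : ℝ := if D < G.degree v then 1 else 0

/-- The measure `ν` of the proof sketch: `ν b = P(deg x₁ > D, deg x₂ > D, x₂ = b)`;
`threeStepHighMass` is `ν'`. -/
noncomputable def twoStepHighMass (b : V) : ℝ :=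
  highDegInd G D b * ∑ x1, highDegInd G D x1 * (stepWt G x0 x1 * stepWt G x1 b)

noncomputable def threeStepHighMass (t : V) : ℝ :=
  ∑ b, twoStepHighMass G D x0 b * stepWt G b t

lemma highDegInd_nonneg (v : V) : 0 ≤ highDegInd G D v := by
  unfold highDegInd; split <;> norm_num

lemma highDegInd_le_one (v : V) : highDegInd G D v ≤ 1 := by
  unfold highDegInd; split <;> norm_num

lemma sum_highDegInd_mul_nonneg (b : V) :
    0 ≤ ∑ x1, highDegInd G D x1 * (stepWt G x0 x1 * stepWt G x1 b) :=
  sum_nonneg fun x1 _ => mul_nonneg (highDegInd_nonneg G D x1)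
    (mul_nonneg (stepWt_nonneg G _ _) (stepWt_nonneg G _ _))

lemma twoStepHighMass_nonneg (b : V) : 0 ≤ twoStepHighMass G D x0 b :=
  mul_nonneg (highDegInd_nonneg G D b) (sum_highDegInd_mul_nonneg G D x0 b)

lemma threeStepHighMass_nonneg (t : V) : 0 ≤ threeStepHighMass G D x0 t :=
  sum_nonneg fun b _ => mul_nonneg (twoStepHighMass_nonneg G D x0 b) (stepWt_nonneg G b t)

lemma twoStepHighMass_le_inv (hD : 0 < D) (hx0 : G.degree x0 ≠ 0) (b : V) :
    twoStepHighMass G D x0 b ≤ D⁻¹ := by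
  have hstep (x1 : V) :
      highDegInd G D x1 * (stepWt G x0 x1 * stepWt G x1 b) ≤ stepWt G x0 x1 * D⁻¹ := by
    unfold highDegInd
    split_ifs with h
    · rw [one_mul]
      exact mul_le_mul_of_nonneg_left ((stepWt_le_inv_degree G x1 b).trans
        (inv_anti₀ hD h.le)) (stepWt_nonneg G x0 x1)
    · rw [zero_mul]; exact mul_nonneg (stepWt_nonneg G x0 x1) (inv_nonneg.2 hD.le)
  calc twoStepHighMass G D x0 b
      ≤ ∑ x1, highDegInd G D x1 * (stepWt G x0 x1 * stepWt G x1 b) :=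
        mul_le_of_le_one_left (sum_highDegInd_mul_nonneg G D x0 b) (highDegInd_le_one G D b)
    _ ≤ ∑ x1, stepWt G x0 x1 * D⁻¹ := sum_le_sum fun x1 _ => hstep x1
    _ = D⁻¹ := by rw [← sum_mul, sum_stepWt G hx0, one_mul]

lemma lt_degree_and_dist_le_two_of_twoStepHighMass_ne_zero {b : V}
    (h : twoStepHighMass G D x0 b ≠ 0) : D < G.degree b ∧ G.dist x0 b ≤ 2 := by
  obtain ⟨hb, hsum⟩ := mul_ne_zero_iff.mp h
  obtain ⟨x1, -, hx1⟩ := exists_ne_zero_of_sum_ne_zero hsum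
  obtain ⟨-, h01, h1b⟩ := by simpa only [mul_ne_zero_iff] using hx1
  refine ⟨by by_contra hD; simp [highDegInd, hD] at hb, ?_⟩
  exact dist_le_two_of_adj_of_adj (adj_of_stepWt_ne_zero G h01) (adj_of_stepWt_ne_zero G h1b)

lemma one_sub_sum_twoStepHighMass_le (hD : 0 ≤ D) (hdeg : ∀ v, G.degree v ≠ 0) :
    1 - ∑ b, twoStepHighMass G D x0 b ≤
      D * (∑ x1, stepWt G x0 x1 * stepWt G x1 x0 +
        ∑ x1, ∑ x2, stepWt G x0 x1 * stepWt G x1 x2 * stepWt G x2 x1) := by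
  have hterm (x1 x2 : V) :
      (1 - highDegInd G D x1 * highDegInd G D x2) * (stepWt G x0 x1 * stepWt G x1 x2) ≤
        D * (stepWt G x0 x1 * stepWt G x1 x0) * stepWt G x1 x2 +
          D * (stepWt G x0 x1 * stepWt G x1 x2 * stepWt G x2 x1) := by
    have h01 := stepWt_nonneg G x0 x1
    have h12 := stepWt_nonneg G x1 x2
    have hR1 : 0 ≤ D * (stepWt G x0 x1 * stepWt G x1 x0) * stepWt G x1 x2 :=
      mul_nonneg (mul_nonneg hD (mul_nonneg h01 (stepWt_nonneg G x1 x0))) h12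
    have hR2 : 0 ≤ D * (stepWt G x0 x1 * stepWt G x1 x2 * stepWt G x2 x1) :=
      mul_nonneg hD (mul_nonneg (mul_nonneg h01 h12) (stepWt_nonneg G x2 x1))
    by_cases h1 : D < G.degree x1
    · by_cases h2 : D < G.degree x2
      · simp only [highDegInd, if_pos h1, if_pos h2, mul_one, sub_self, zero_mul]
        positivity
      · have := stepWt_le_mul_stepWt_mul_stepWt G D (a := x1) (not_lt.1 h2)
        simp only [highDegInd, if_pos h1, if_neg h2, mul_zero, sub_zero, one_mul]
        linarith [mul_le_mul_of_nonneg_left this h01]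
    · have := stepWt_le_mul_stepWt_mul_stepWt G D (a := x0) (not_lt.1 h1)
      simp only [highDegInd, if_neg h1, zero_mul, sub_zero, one_mul]
      linarith [mul_le_mul_of_nonneg_right this h12]
  calc 1 - ∑ b, twoStepHighMass G D x0 b
      = ∑ x1, ∑ x2,
          (1 - highDegInd G D x1 * highDegInd G D x2) * (stepWt G x0 x1 * stepWt G x1 x2) := by
        simp only [sub_mul, one_mul, sum_sub_distrib, ← mul_sum, sum_stepWt G (hdeg _), mul_one]
        rw [sum_comm]
        simp only [twoStepHighMass, mul_sum]
        congr 1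
        exact sum_congr rfl fun _ _ => sum_congr rfl fun _ _ => by ring
    _ ≤ ∑ x1, ∑ x2, (D * (stepWt G x0 x1 * stepWt G x1 x0) * stepWt G x1 x2 +
          D * (stepWt G x0 x1 * stepWt G x1 x2 * stepWt G x2 x1)) := by
        gcongr with x1 _ x2 _
        exact hterm x1 x2
    _ = _ := by
        simp only [sum_add_distrib, ← mul_sum, sum_stepWt G (hdeg _), mul_one]
        rw [mul_add]

lemma sum_threeStepHighMass_mul_le :
    ∑ t, threeStepHighMass G D x0 t * oneStepNearProb G x0 t ≤ fourStepNearProb G x0 := by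
  calc ∑ t, threeStepHighMass G D x0 t * oneStepNearProb G x0 t
      = ∑ x3, ∑ x2, ∑ x1, highDegInd G D x1 * highDegInd G D x2 *
          (stepWt G x0 x1 * stepWt G x1 x2 * stepWt G x2 x3 * oneStepNearProb G x0 x3) := by
        simp only [threeStepHighMass, twoStepHighMass, sum_mul, mul_sum]
        exact sum_congr rfl fun _ _ => sum_congr rfl fun _ _ => sum_congr rfl fun _ _ => by ring
    _ ≤ ∑ x3, ∑ x2, ∑ x1,
          stepWt G x0 x1 * stepWt G x1 x2 * stepWt G x2 x3 * oneStepNearProb G x0 x3 :=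
        sum_le_sum fun x3 _ => sum_le_sum fun x2 _ => sum_le_sum fun x1 _ =>
          mul_le_of_le_one_left (fourStepNearProb_term_nonneg G x0 x1 x2 x3)
            (mul_le_one₀ (highDegInd_le_one G D x1) (highDegInd_nonneg G D x2)
              (highDegInd_le_one G D x2))
    _ = fourStepNearProb G x0 := (sum_sum_sum_comm _).symm

lemma sq_mul_twoStepHighMass_div_degree_le (hD : 0 < D) (hx0 : G.degree x0 ≠ 0) (b : V) :
    D ^ 2 * twoStepHighMass G D x0 b / G.degree b ≤ if G.dist x0 b < 4 then 1 else 0 := by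
  by_cases hb : twoStepHighMass G D x0 b = 0
  · rw [hb, mul_zero, zero_div]; split <;> norm_num
  obtain ⟨hDb, hdist⟩ := lt_degree_and_dist_le_two_of_twoStepHighMass_ne_zero G D x0 hb
  rw [if_pos (by omega)]
  calc D ^ 2 * twoStepHighMass G D x0 b / G.degree b
      = D ^ 2 * twoStepHighMass G D x0 b * (G.degree b : ℝ)⁻¹ := div_eq_mul_inv _ _
    _ ≤ D ^ 2 * D⁻¹ * D⁻¹ := by
        gcongr
        exact twoStepHighMass_le_inv G D x0 hD hx0 b
    _ = 1 := by field_simp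

lemma sq_mul_threeStepHighMass_div_degree_le (hD : 0 < D) (hx0 : G.degree x0 ≠ 0) (t : V) :
    D ^ 2 * threeStepHighMass G D x0 t / G.degree t ≤ oneStepNearProb G x0 t :=
  calc D ^ 2 * threeStepHighMass G D x0 t / G.degree t
      = ∑ b, stepWt G t b * (D ^ 2 * twoStepHighMass G D x0 b / G.degree b) := by
        rw [threeStepHighMass, mul_sum, sum_div]
        refine sum_congr rfl fun b _ => ?_
        linear_combination (D ^ 2 * twoStepHighMass G D x0 b) * stepWt_div_degree_comm G b t
    _ ≤ oneStepNearProb G x0 t :=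
        sum_le_sum fun b _ => mul_le_mul_of_nonneg_left
          (sq_mul_twoStepHighMass_div_degree_le G D x0 hD hx0 b) (stepWt_nonneg G t b)

lemma sq_mul_sum_sq_div_degree_le_fourStepNearProb (hD : 0 < D) (hx0 : G.degree x0 ≠ 0) :
    D ^ 2 * ∑ t, threeStepHighMass G D x0 t ^ 2 / G.degree t ≤ fourStepNearProb G x0 :=
  calc D ^ 2 * ∑ t, threeStepHighMass G D x0 t ^ 2 / G.degree t
      = ∑ t, threeStepHighMass G D x0 t * (D ^ 2 * threeStepHighMass G D x0 t / G.degree t) := by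
        rw [mul_sum]
        exact sum_congr rfl fun _ _ => by ring
    _ ≤ ∑ t, threeStepHighMass G D x0 t * oneStepNearProb G x0 t :=
        sum_le_sum fun t _ => mul_le_mul_of_nonneg_left
          (sq_mul_threeStepHighMass_div_degree_le G D x0 hD hx0 t)
          (threeStepHighMass_nonneg G D x0 t)
    _ ≤ fourStepNearProb G x0 := sum_threeStepHighMass_mul_le G D x0

lemma sum_threeStepHighMass (hdeg : ∀ v, G.degree v ≠ 0) :
    ∑ t, threeStepHighMass G D x0 t = ∑ b, twoStepHighMass G D x0 b := by
  simp only [threeStepHighMass]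
  rw [sum_comm]
  simp only [← mul_sum, sum_stepWt G (hdeg _), mul_one]

lemma sq_sum_le_sum_sq_div_degree_mul_card_sq (hdeg : ∀ v, G.degree v ≠ 0) (f : V → ℝ) :
    (∑ v, f v) ^ 2 ≤ (∑ v, f v ^ 2 / G.degree v) * (Fintype.card V : ℝ) ^ 2 := by
  have hsum : ∑ v, (G.degree v : ℝ) ≤ (Fintype.card V : ℝ) ^ 2 :=
    calc ∑ v, (G.degree v : ℝ) ≤ ∑ _v : V, (Fintype.card V : ℝ) :=
          sum_le_sum fun v _ => by exact_mod_cast (G.degree_lt_card_verts v).le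
      _ = (Fintype.card V : ℝ) ^ 2 := by rw [sum_const, card_univ, nsmul_eq_mul, sq]
  calc (∑ v, f v) ^ 2 ≤ (∑ v, f v ^ 2 / G.degree v) * ∑ v, (G.degree v : ℝ) :=
        sum_sq_le_sum_mul_sum_of_sq_le_mul _ (fun v _ => by positivity) (fun v _ => by positivity)
          fun v _ => (div_mul_cancel₀ _ (by exact_mod_cast hdeg v)).ge
    _ ≤ (∑ v, f v ^ 2 / G.degree v) * (Fintype.card V : ℝ) ^ 2 :=
        mul_le_mul_of_nonneg_left hsum (sum_nonneg fun v _ => by positivity)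

end

lemma inv_four_mul_le_of_bounds {D N P A B M Q : ℝ} (hD : 0 < D) (hDN : D ^ 3 = N)
    (hA : A ≤ P) (hB : B ≤ P) (hM : 1 - M ≤ D * (A + B)) (hMQ : M ^ 2 ≤ Q * N)
    (hQP : D ^ 2 * Q ≤ P) : 1 / (4 * D) ≤ P := by
  rw [div_le_iff₀ (by positivity)]
  by_contra! h
  have hM' : 1 / 2 < M := by nlinarith
  have hQN : 1 / 4 < Q * N := by nlinarith
  have hDP : D * (D ^ 2 * Q) ≤ D * P := mul_le_mul_of_nonneg_left hQP hD.le
  rw [← hDN] at hQN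
  nlinarith

/-- **Four-step lemma.** For a simple random walk `(x_0,x_1,x_2,x_3,x_4)` on a connected
simple graph on `n ≥ 2` vertices, `P( d(x_0,x_4) < 4 ) ≥ 1/(4 n^{2/3})`. -/
theorem four_step_lemma {V : Type} [Fintype V] (G : SimpleGraph V) (n : ℕ) (hn : 2 ≤ n)
    (hcard : Fintype.card V = n) (hconn : G.Connected) (x0 : V) :
    1 / (4 * (n : ℝ) ^ ((2 : ℝ) / 3))
      ≤ walkProb G 4 x0 (fun p => G.dist x0 (p (Fin.last 4)) < 4) := by
  have : Nontrivial V := Fintype.one_lt_card_iff_nontrivial.1 (hcard ▸ hn)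
  have hdeg (v : V) : G.degree v ≠ 0 := (hconn.preconnected.degree_pos_of_nontrivial v).ne'
  set D : ℝ := (n : ℝ) ^ ((2 : ℝ) / 3)
  have hD : 0 < D := by positivity
  have hD3 : D ^ 3 = (n : ℝ) ^ 2 := by
    rw [← Real.rpow_mul_natCast (by positivity)]; norm_num
  rw [walkProb_eq_fourStepNearProb]
  refine inv_four_mul_le_of_bounds hD hD3
    (sum_stepWt_mul_stepWt_le_fourStepNearProb G x0 (hdeg x0))
    (sum_stepWt_mul_stepWt_mul_stepWt_le_fourStepNearProb G x0)
    (one_sub_sum_twoStepHighMass_le G D x0 hD.le hdeg) ?_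
    (sq_mul_sum_sq_div_degree_le_fourStepNearProb G D x0 hD (hdeg x0))
  rw [← sum_threeStepHighMass G D x0 hdeg, ← hcard]
  exact sq_sum_le_sum_sq_div_degree_mul_card_sq G hdeg _
end

section
/- The four-step lemma fails with three steps: for infinitely many n there exist a finite connected simple graph G on n vertices and a vertex x_0 of G such that the simple random walk (x_0, x_1, x_2, x_3) on G started at x_0 satisfies P( d(x_0, x_3) < 3 ) < 4/n. -/
open scoped Classical

/-!
Take the graph with layers `{0}`, `{1}`, `L₂`, `L₃`, where `|L₂| = |L₃| = m`, and join every vertex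
to every vertex of the neighbouring layers; it has `n = 2m + 2` vertices, and the distance from
`0` is the layer index. Since a vertex of layer `k` is adjacent to all of layers `k ± 1`, the layer
of the walk is itself a Markov chain. Started at `0`, the walk ends at distance
`< 3` after three steps only along `0 → 1 → 0 → 1` or `0 → 1 → L₂ → 1`, which has probability
`1/(m+1) + m/(m+1)² = (2m+1)/(m+1)² < 2/(m+1) = 4/n`.
-/

open Finset

noncomputable def walkProbEnd {V : Type} [Fintype V] (G : SimpleGraph V) (t : ℕ) (x : V)
    (E : V → Prop) : ℝ :=
  walkProb G t x (fun p => E (p (Fin.last t)))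

section RandomWalk

variable {V : Type} [Fintype V] (G : SimpleGraph V)

theorem walkProbEnd_zero (x : V) (E : V → Prop) :
    walkProbEnd G 0 x E = if E x then 1 else 0 := by
  rw [walkProbEnd, walkProb, ← (Equiv.funUnique (Fin 1) V).symm.sum_comp]
  simp [Fin.last, ite_and]

theorem walkProbEnd_succ (t : ℕ) (x : V) (E : V → Prop) :
    walkProbEnd G (t + 1) x E = ∑ b, stepWt G x b * walkProbEnd G t b E := by
  calc walkProbEnd G (t + 1) x E
      = ∑ q : Fin (t + 1) → V, if E (q (Fin.last t)) then
          stepWt G x (q 0) * ∏ i : Fin t, stepWt G (q i.castSucc) (q i.succ) else 0 := by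
        rw [walkProbEnd, walkProb, ← (Fin.consEquiv fun _ => V).sum_comp, Fintype.sum_prod_type,
          Fintype.sum_eq_single x fun a ha => by simp [ha]]
        simp [Fin.prod_univ_succ, ← Fin.succ_last]
    _ = ∑ b, stepWt G x b * walkProbEnd G t b E := by
        simp only [walkProbEnd, walkProb, mul_sum]
        rw [sum_comm]
        refine sum_congr rfl fun q _ => ?_
        rw [Fintype.sum_eq_single (q 0) fun b hb => by simp [Ne.symm hb]]
        simp [mul_ite]

theorem sum_stepWt_mul (a : V) (f : V → ℝ) :
    ∑ b, stepWt G a b * f b = (∑ b ∈ G.neighborFinset a, f b) / G.degree a := by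
  simp only [stepWt, ite_mul, zero_mul, sum_ite, sum_const_zero, add_zero, ← mul_sum,
    SimpleGraph.neighborFinset_eq_filter]
  rw [div_eq_inv_mul]

end RandomWalk

def layerGraph {V : Type} (ℓ : V → ℕ) : SimpleGraph V where
  Adj a b := ℓ a + 1 = ℓ b ∨ ℓ b + 1 = ℓ a
  symm := ⟨fun _ _ => Or.symm⟩
  loopless := ⟨fun _ h => by omega⟩

/-- At `k = 0` the truncated `k - 1` is harmless: its coefficient counts the `b` with
`ℓ b + 1 = 0`, of which there are none. -/
noncomputable def levelStep {V : Type} [Fintype V] (ℓ : V → ℕ) (g : ℕ → ℝ) (k : ℕ) : ℝ :=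
  (#{b | ℓ b + 1 = k} * g (k - 1) + #{b | ℓ b = k + 1} * g (k + 1)) /
    (#{b | ℓ b + 1 = k} + #{b | ℓ b = k + 1})

namespace layerGraph

variable {V : Type} (ℓ : V → ℕ)

@[simp]
theorem adj_iff {a b : V} : (layerGraph ℓ).Adj a b ↔ ℓ a + 1 = ℓ b ∨ ℓ b + 1 = ℓ a := Iff.rfl

theorem le_add_length {a b : V} (w : (layerGraph ℓ).Walk a b) : ℓ b ≤ ℓ a + w.length := by
  induction w with
  | nil => simp
  | cons h _ ih => rw [adj_iff] at h; rw [SimpleGraph.Walk.length_cons]; omega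

theorem sum_stepWt_mul_comp [Fintype V] (a : V) (g : ℕ → ℝ) :
    ∑ b, stepWt (layerGraph ℓ) a b * g (ℓ b) = levelStep ℓ g (ℓ a) := by
  set below : Finset V := {b | ℓ b + 1 = ℓ a}
  set above : Finset V := {b | ℓ b = ℓ a + 1}
  have hdisj : Disjoint below above := disjoint_filter.2 fun _ _ h => by omega
  have hN : (layerGraph ℓ).neighborFinset a = below ∪ above := by
    ext b
    simp only [below, above, SimpleGraph.mem_neighborFinset, adj_iff, mem_union, mem_filter_univ]
    omega
  have hbelow : ∀ b ∈ below, g (ℓ b) = g (ℓ a - 1) := fun b hb => by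
    rw [← (mem_filter_univ _).1 hb, Nat.add_sub_cancel]
  have habove : ∀ b ∈ above, g (ℓ b) = g (ℓ a + 1) := fun b hb => by
    rw [(mem_filter_univ _).1 hb]
  rw [sum_stepWt_mul, ← SimpleGraph.card_neighborFinset_eq_degree, hN, sum_union hdisj,
    card_union_of_disjoint hdisj, sum_congr rfl hbelow, sum_congr rfl habove, sum_const, sum_const,
    levelStep]
  simp [below, above]

variable {ℓ} {x₀ : V}

theorem exists_walk_length_eq (hroot : ∀ b, ℓ b = 0 ↔ b = x₀)
    (hdown : ∀ b k, ℓ b = k + 1 → ∃ a, ℓ a = k) (b : V) :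
    ∃ w : (layerGraph ℓ).Walk x₀ b, w.length = ℓ b := by
  induction h : ℓ b generalizing b with
  | zero =>
    obtain rfl := (hroot b).1 h
    exact ⟨.nil, rfl⟩
  | succ k ih =>
    obtain ⟨a, ha⟩ := hdown b k h
    obtain ⟨w, hw⟩ := ih a ha
    exact ⟨w.concat (by rw [adj_iff]; omega), by simp [hw]⟩

theorem dist_eq (hroot : ∀ b, ℓ b = 0 ↔ b = x₀) (hdown : ∀ b k, ℓ b = k + 1 → ∃ a, ℓ a = k)
    (b : V) : (layerGraph ℓ).dist x₀ b = ℓ b := by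
  obtain ⟨w, hw⟩ := exists_walk_length_eq hroot hdown b
  obtain ⟨v, hv⟩ := w.reachable.exists_walk_length_eq_dist
  have := le_add_length ℓ v
  have := SimpleGraph.dist_le w
  rw [(hroot x₀).2 rfl] at *
  omega

theorem connected (hroot : ∀ b, ℓ b = 0 ↔ b = x₀) (hdown : ∀ b k, ℓ b = k + 1 → ∃ a, ℓ a = k) :
    (layerGraph ℓ).Connected :=
  SimpleGraph.connected_iff_exists_forall_reachable _ |>.2
    ⟨x₀, fun b => (exists_walk_length_eq hroot hdown b).elim fun w _ => w.reachable⟩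

end layerGraph

theorem walkProbEnd_layerGraph {V : Type} [Fintype V] (ℓ : V → ℕ) (P : ℕ → Prop)
    [DecidablePred P] (t : ℕ) (x : V) :
    walkProbEnd (layerGraph ℓ) t x (fun b => P (ℓ b)) =
      (levelStep ℓ)^[t] (fun k => if P k then 1 else 0) (ℓ x) := by
  induction t generalizing x with
  | zero => rw [walkProbEnd_zero]; congr
  | succ t ih =>
    simp only [walkProbEnd_succ, ih, Function.iterate_succ_apply']
    exact layerGraph.sum_stepWt_mul_comp ℓ x _

theorem Fin.card_filter_val_eq (n : ℕ) (P : ℕ → Prop) [DecidablePred P] :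
    #{i : Fin n | P i} = #{k ∈ range n | P k} := by
  rw [← card_map Fin.valEmbedding, map_filter', Fin.map_valEmbedding_univ, Nat.Iio_eq_range]
  congr 1
  refine filter_congr fun k hk => ⟨?_, fun h => ⟨⟨k, mem_range.1 hk⟩, h, rfl⟩⟩
  rintro ⟨i, h, rfl⟩
  exact h

def fourLayers (m k : ℕ) : ℕ := if k ≤ m + 1 then min k 2 else 3

theorem fourLayers_eq_zero_iff (m : ℕ) (b : Fin (2 * m + 2)) :
    fourLayers m b = 0 ↔ b = ⟨0, by omega⟩ := by
  grind [fourLayers]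

theorem exists_fourLayers_eq (m : ℕ) (b : Fin (2 * m + 2)) (k : ℕ) (h : fourLayers m b = k + 1) :
    ∃ a : Fin (2 * m + 2), fourLayers m a = k := by
  exact ⟨⟨k, by grind [fourLayers]⟩, by grind [fourLayers]⟩

theorem card_fourLayers_eq (m : ℕ) {k : ℕ} (hk : k ≤ 3) :
    #{b : Fin (2 * m + 2) | fourLayers m b = k} = if k ≤ 1 then 1 else m := by
  rw [Fin.card_filter_val_eq _ (fun i => fourLayers m i = k)]
  have key : ∀ s : Finset ℕ, (∀ i, i < 2 * m + 2 ∧ fourLayers m i = k ↔ i ∈ s) →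
      #{i ∈ range (2 * m + 2) | fourLayers m i = k} = #s := fun s hs => by
    congr 1; ext i; rw [mem_filter, mem_range, hs]
  interval_cases k
  · rw [key {0} fun i => by grind [fourLayers]]; rfl
  · rw [key {1} fun i => by grind [fourLayers]]; rfl
  · rw [key (Ico 2 (m + 2)) fun i => by grind [fourLayers], Nat.card_Ico]; rfl
  · rw [key (Ico (m + 2) (2 * m + 2)) fun i => by grind [fourLayers], Nat.card_Ico,
      if_neg (by norm_num)]
    omega

theorem levelStep_fourLayers_iterate_three (m : ℕ) :
    (levelStep fun b : Fin (2 * m + 2) => fourLayers m b)^[3]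
      (fun k => if k < 3 then 1 else 0) 0 = (2 * m + 1) / (m + 1) ^ 2 := by
  set ℓ : Fin (2 * m + 2) → ℕ := fun b => fourLayers m b with hℓ
  have step₀ : ∀ f, levelStep ℓ f 0 = f 1 := by simp [levelStep, hℓ, card_fourLayers_eq]
  have step₁ : ∀ f, levelStep ℓ f 1 = (f 0 + m * f 2) / (m + 1) := by
    simp [levelStep, hℓ, card_fourLayers_eq, add_comm]
  have step₂ : ∀ f, levelStep ℓ f 2 = (f 1 + m * f 3) / (m + 1) := by
    simp [levelStep, hℓ, card_fourLayers_eq, add_comm]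
  simp only [Function.iterate_succ_apply', Function.iterate_zero_apply, step₀, step₁, step₂]
  norm_num
  field_simp
  ring

/-- **The four-step lemma fails with three steps:** for infinitely many `n` there is a
connected simple graph `G` on `n` vertices and a start vertex `x0` with
`P( d(x_0,x_3) < 3 ) < 4/n`. -/
theorem three_step_lemma_fails :
    ∀ N : ℕ, ∃ n : ℕ, N ≤ n ∧ ∃ G : SimpleGraph (Fin n), G.Connected ∧ ∃ x0 : Fin n,
      walkProb G 3 x0 (fun p => G.dist x0 (p (Fin.last 3)) < 3) < 4 / n := by
  intro m
  have hroot := fourLayers_eq_zero_iff m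
  have hdown := exists_fourLayers_eq m
  refine ⟨2 * m + 2, by omega, _, layerGraph.connected hroot hdown, ⟨0, by omega⟩, ?_⟩
  simp only [layerGraph.dist_eq hroot hdown]
  change walkProbEnd _ 3 _ (fun b : Fin (2 * m + 2) => fourLayers m b < 3) < _
  rw [walkProbEnd_layerGraph _ (· < 3), (hroot _).2 rfl, levelStep_fourLayers_iterate_three,
    div_lt_div_iff₀ (by positivity) (by positivity)]
  push_cast
  nlinarith
end
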